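/- arXiv:2504.21807 — 4 statements merged into one kernel-verified Lean document; each statement's English description precedes it below -/
import Mathlib

section
/- Let $E \subset \Omega \times M$ be a chain control set of a nonautonomous control system. Then every fiber $E_\omega = \{x \in M : (\omega,x) \in E\}$ is closed in $M$. -/
/-!
The fiberwise closure `E'` of `E` is again control invariant: a control for a limit point is a
cluster point of controls for approximating points, which exists since `U` is compact. It is
again chain connected: from a point of `E'` one step of the flow lands in `E'`, hence within
`ε` of a point of `E`, and an `ε/2`-chain in `E` ends within `ε/2` of any point of `E'`.
Maximality of `E` then forces `E' = E`.
-/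

open Metric Set

/-- A controlled `(ε,T)`-chain from `p` to `q`: exact motion in the base `Ω`,
`ε`-jumps in the state space `M`, jump times at least `T`. -/
def ControlledChain {Ω M U : Type*} [MetricSpace Ω] [MetricSpace M]
    (σ : ℝ → Ω → Ω) (φ : ℝ → Ω → M → U → M)
    (ε T : ℝ) (p q : Ω × M) : Prop :=
  ∃ (n : ℕ) (ωc : Fin (n + 1) → Ω) (xc : Fin (n + 1) → M)
    (u : Fin n → U) (Tt : Fin n → ℝ),
    0 < n ∧ ωc 0 = p.1 ∧ xc 0 = p.2 ∧ xc (Fin.last n) = q.2 ∧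
    (∀ j : Fin n, T ≤ Tt j) ∧
    (∀ j : Fin n, σ (Tt j) (ωc (Fin.castSucc j)) = ωc (Fin.succ j)) ∧
    dist (ωc (Fin.last n)) q.1 < ε ∧
    ∀ j : Fin n,
      dist (φ (Tt j) (ωc (Fin.castSucc j)) (xc (Fin.castSucc j)) (u j)) (xc (Fin.succ j)) < ε

/-- A (nonautonomous) chain control set: a maximal nonvoid set `E ⊆ Ω × M` such that
(i) every point admits a control keeping the complete trajectory in `E`, and
(ii) any two points are joined by controlled `(ε,T)`-chains for all `ε, T > 0`. -/
def IsChainControlSet {Ω M U : Type*} [MetricSpace Ω] [MetricSpace M]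
    (σ : ℝ → Ω → Ω) (φ : ℝ → Ω → M → U → M) (E : Set (Ω × M)) : Prop :=
  E.Nonempty ∧
  (∀ p ∈ E, ∃ u : U, ∀ t : ℝ, (σ t p.1, φ t p.1 p.2 u) ∈ E) ∧
  (∀ p ∈ E, ∀ q ∈ E, ∀ ε T : ℝ, 0 < ε → 0 < T → ControlledChain σ φ ε T p q) ∧
  ∀ E' : Set (Ω × M), E ⊆ E' →
    (∀ p ∈ E', ∃ u : U, ∀ t : ℝ, (σ t p.1, φ t p.1 p.2 u) ∈ E') →
    (∀ p ∈ E', ∀ q ∈ E', ∀ ε T : ℝ, 0 < ε → 0 < T → ControlledChain σ φ ε T p q) →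
    E' = E

section ChainControl

variable {Ω M U : Type*}

def IsControlInvariant (σ : ℝ → Ω → Ω) (φ : ℝ → Ω → M → U → M) (E : Set (Ω × M)) : Prop :=
  ∀ p ∈ E, ∃ u : U, ∀ t : ℝ, (σ t p.1, φ t p.1 p.2 u) ∈ E

def IsChainConnected [MetricSpace Ω] [MetricSpace M]
    (σ : ℝ → Ω → Ω) (φ : ℝ → Ω → M → U → M) (E : Set (Ω × M)) : Prop :=
  ∀ p ∈ E, ∀ q ∈ E, ∀ ε T : ℝ, 0 < ε → 0 < T → ControlledChain σ φ ε T p q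

def fiberClosure [TopologicalSpace M] (E : Set (Ω × M)) : Set (Ω × M) :=
  {p | p.2 ∈ closure {x | (p.1, x) ∈ E}}

theorem subset_fiberClosure [TopologicalSpace M] (E : Set (Ω × M)) : E ⊆ fiberClosure E :=
  fun _ hp => subset_closure hp

theorem IsControlInvariant.fiberClosure [TopologicalSpace M] [TopologicalSpace U]
    [CompactSpace U] {σ : ℝ → Ω → Ω} {φ : ℝ → Ω → M → U → M} {E : Set (Ω × M)}
    (hE : IsControlInvariant σ φ E) (hφ : ∀ t ω, Continuous fun q : M × U => φ t ω q.1 q.2) :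
    IsControlInvariant σ φ (fiberClosure E) := by
  rintro ⟨ω, x⟩ hx
  let S : Set (M × U) := {q | ∀ t, (σ t ω, φ t ω q.1 q.2) ∈ E}
  have hfiber : {z | (ω, z) ∈ E} ⊆ Prod.fst '' S := fun z hz =>
    let ⟨u, hu⟩ := hE (ω, z) hz
    ⟨(z, u), hu, rfl⟩
  have hx' : x ∈ Prod.fst '' closure S :=
    closure_minimal (hfiber.trans (image_mono subset_closure))
      (isClosedMap_fst_of_compactSpace (closure S) isClosed_closure) hx
  obtain ⟨⟨x, u⟩, hxu, rfl⟩ := hx'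
  refine ⟨u, fun t => ?_⟩
  show φ t ω x u ∈ closure {z | (σ t ω, z) ∈ E}
  exact map_mem_closure (f := fun q : M × U => φ t ω q.1 q.2) (hφ t ω) hxu fun q hq => hq t

section Chains

variable [MetricSpace Ω] [MetricSpace M] {σ : ℝ → Ω → Ω} {φ : ℝ → Ω → M → U → M}

theorem ControlledChain.cons {ε T τ : ℝ} {ω : Ω} {x z : M} {u : U} {q : Ω × M}
    (hτ : T ≤ τ) (hjump : dist (φ τ ω x u) z < ε)
    (h : ControlledChain σ φ ε T (σ τ ω, z) q) : ControlledChain σ φ ε T (ω, x) q := by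
  obtain ⟨n, ωc, xc, uc, Tt, -, hω0, hx0, hlast, hT, hσ, hend, hjumps⟩ := h
  refine ⟨n + 1, Fin.cons ω ωc, Fin.cons x xc, Fin.cons u uc, Fin.cons τ Tt, n.succ_pos,
    rfl, rfl, ?_, ?_, ?_, ?_, ?_⟩
  · rwa [← Fin.succ_last, Fin.cons_succ]
  · exact Fin.cases (by simpa using hτ) fun i => by simpa using hT i
  · refine Fin.cases (by simpa using hω0.symm) fun i => ?_
    simpa only [← Fin.succ_castSucc, Fin.cons_succ] using hσ i
  · rwa [← Fin.succ_last, Fin.cons_succ]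
  · refine Fin.cases (by simpa [hx0] using hjump) fun i => ?_
    simpa only [← Fin.succ_castSucc, Fin.cons_succ] using hjumps i

theorem ControlledChain.of_dist_target_lt {ε δ T : ℝ} {p q q' : Ω × M}
    (h : ControlledChain σ φ ε T p q) (hq : dist q q' < δ) :
    ControlledChain σ φ (ε + δ) T p q' := by
  obtain ⟨n, ωc, xc, uc, Tt, hn, hω0, hx0, hlast, hT, hσ, hend, hjumps⟩ := h
  have hδ : 0 ≤ δ := dist_nonneg.trans hq.le
  have hq₁ : dist q.1 q'.1 < δ := (le_max_left _ _).trans_lt hq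
  have hq₂ : dist q.2 q'.2 < δ := (le_max_right _ _).trans_lt hq
  refine ⟨n, ωc, Function.update xc (Fin.last n) q'.2, uc, Tt, hn, hω0, ?_, by simp, hT, hσ,
    ?_, fun j => ?_⟩
  · rwa [Function.update_of_ne (Fin.ne_of_val_ne hn.ne)]
  · linarith [dist_triangle (ωc (Fin.last n)) q.1 q'.1]
  · rw [Function.update_of_ne (Fin.castSucc_lt_last j).ne]
    by_cases hj : j.succ = Fin.last n
    · rw [hj, Function.update_self]
      have hjump := hjumps j
      rw [hj, hlast] at hjump
      linarith [dist_triangle (φ (Tt j) (ωc j.castSucc) (xc j.castSucc) (uc j)) q.2 q'.2]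
    · rw [Function.update_of_ne hj]
      linarith [hjumps j]

theorem IsChainConnected.fiberClosure {E : Set (Ω × M)} (hE : IsChainConnected σ φ E)
    (hinv : IsControlInvariant σ φ (fiberClosure E)) :
    IsChainConnected σ φ (fiberClosure E) := by
  rintro ⟨ω, x⟩ hx ⟨ω', y⟩ hy ε T hε hT
  obtain ⟨u, hu⟩ := hinv (ω, x) hx
  obtain ⟨z, hz, hjump⟩ := Metric.mem_closure_iff.mp (hu T) ε hε
  obtain ⟨y', hy', hyy'⟩ := Metric.mem_closure_iff.mp hy (ε / 2) (half_pos hε)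
  have hchain : ControlledChain σ φ (ε / 2 + ε / 2) T (σ T ω, z) (ω', y) :=
    (hE _ hz _ hy' (ε / 2) T (half_pos hε) hT).of_dist_target_lt
      (by simpa [Prod.dist_eq, dist_comm] using hyy')
  exact ControlledChain.cons le_rfl hjump (add_halves ε ▸ hchain)

end Chains

end ChainControl

theorem chainControlSet_fibers_closed_general {Ω M U : Type*} [MetricSpace Ω]
    [MetricSpace M] [MetricSpace U] [CompactSpace U]
    (σ : ℝ → Ω → Ω) (φ : ℝ → Ω → M → U → M)
    (hφcont : Continuous fun p : ℝ × Ω × M × U => φ p.1 p.2.1 p.2.2.1 p.2.2.2)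
    (E : Set (Ω × M)) (hE : IsChainControlSet σ φ E) :
    ∀ ω : Ω, IsClosed {x : M | (ω, x) ∈ E} := by
  obtain ⟨-, hinv, hchain, hmax⟩ := hE
  have hinv' : IsControlInvariant σ φ (fiberClosure E) :=
    IsControlInvariant.fiberClosure hinv fun t ω => by fun_prop
  have hclosure : fiberClosure E = E :=
    hmax _ (subset_fiberClosure E) hinv' (IsChainConnected.fiberClosure hchain hinv')
  exact fun ω => closure_subset_iff_isClosed.mp fun x hx => hclosure.subset hx

/-- Proposition 2.5: the fibers `E_ω` of a chain control set `E ⊆ Ω × M` are closed. -/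
theorem chainControlSet_fibers_closed {Ω M U : Type*} [MetricSpace Ω] [CompactSpace Ω]
    [MetricSpace M] [MetricSpace U] [CompactSpace U]
    (σ : ℝ → Ω → Ω) (θ : ℝ → U → U) (φ : ℝ → Ω → M → U → M)
    (hσ0 : ∀ ω : Ω, σ 0 ω = ω)
    (hσadd : ∀ (t s : ℝ) (ω : Ω), σ (t + s) ω = σ s (σ t ω))
    (hσcont : Continuous fun p : ℝ × Ω => σ p.1 p.2)
    (hθ0 : ∀ u : U, θ 0 u = u)
    (hθadd : ∀ (t s : ℝ) (u : U), θ (t + s) u = θ s (θ t u))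
    (hθcont : Continuous fun p : ℝ × U => θ p.1 p.2)
    (hφ0 : ∀ (ω : Ω) (x : M) (u : U), φ 0 ω x u = x)
    (hφadd : ∀ (t s : ℝ) (ω : Ω) (x : M) (u : U),
      φ (t + s) ω x u = φ s (σ t ω) (φ t ω x u) (θ t u))
    (hφcont : Continuous fun p : ℝ × Ω × M × U => φ p.1 p.2.1 p.2.2.1 p.2.2.2)
    (hσmin : ∀ A : Set Ω, IsClosed A → A.Nonempty → (∀ t : ℝ, σ t '' A = A) → A = Set.univ)
    (E : Set (Ω × M)) (hE : IsChainControlSet σ φ E) :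
    ∀ ω : Ω, IsClosed {x : M | (ω, x) ∈ E} :=
  chainControlSet_fibers_closed_general σ φ hφcont E hE
end

section
/- Assume the minimal flow $\sigma$ on the compact metric space $\Omega$ is equicontinuous. Let $E \subset \Omega \times Q$ be a chain control set with $Q \subset M$ compact, and suppose all segments of the controlled chains between points of $E$ can be taken inside $\Omega \times Q$. Then $E$ is compact. -/
open Metric Set

/-- A controlled `(ε,T)`-chain all of whose trajectory segments remain in `Q ⊆ M`. -/
def ControlledChainIn {Ω M U : Type*} [MetricSpace Ω] [MetricSpace M]
    (σ : ℝ → Ω → Ω) (φ : ℝ → Ω → M → U → M) (Q : Set M)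
    (ε T : ℝ) (p q : Ω × M) : Prop :=
  ∃ (n : ℕ) (ωc : Fin (n + 1) → Ω) (xc : Fin (n + 1) → M)
    (u : Fin n → U) (Tt : Fin n → ℝ),
    0 < n ∧ ωc 0 = p.1 ∧ xc 0 = p.2 ∧ xc (Fin.last n) = q.2 ∧
    (∀ j : Fin n, T ≤ Tt j) ∧
    (∀ j : Fin n, σ (Tt j) (ωc (Fin.castSucc j)) = ωc (Fin.succ j)) ∧
    dist (ωc (Fin.last n)) q.1 < ε ∧
    (∀ j : Fin n,
      dist (φ (Tt j) (ωc (Fin.castSucc j)) (xc (Fin.castSucc j)) (u j)) (xc (Fin.succ j)) < ε) ∧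
    ∀ j : Fin n, ∀ t ∈ Set.Icc (0 : ℝ) (Tt j),
      φ t (ωc (Fin.castSucc j)) (xc (Fin.castSucc j)) (u j) ∈ Q

/-! ### Auxiliary machinery -/

lemma uc_aux {X Y : Type*} [MetricSpace X] [MetricSpace Y] {f : X → Y}
    (hf : Continuous f) {K : Set X} (hK : IsCompact K) {ε : ℝ} (hε : 0 < ε) :
    ∃ δ > 0, ∀ a ∈ K, ∀ b, dist a b < δ → dist (f a) (f b) < ε := by
  have h : ∀ a : X, ∃ r > 0, ∀ b, dist a b < r → dist (f a) (f b) < ε / 2 := by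
    intro a
    rcases Metric.continuous_iff.mp hf a (ε / 2) (half_pos hε) with ⟨r, hr, hball⟩
    exact ⟨r, hr, fun b hb => by
      have := hball b (by rwa [dist_comm])
      rwa [dist_comm]⟩
  choose r hr hball using h
  rcases hK.elim_finite_subcover (fun a => Metric.ball a (r a / 2))
      (fun a => isOpen_ball) (fun a ha => mem_iUnion.mpr ⟨a, mem_ball_self (half_pos (hr a))⟩)
    with ⟨s, hs⟩
  rcases s.eq_empty_or_nonempty with hse | hse
  · subst hse
    refine ⟨1, one_pos, fun a ha => ?_⟩
    have : a ∈ (⋃ i ∈ (∅ : Finset X), Metric.ball i (r i / 2)) := hs ha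
    simp at this
  · refine ⟨s.inf' hse (fun a => r a / 2), ?_, ?_⟩
    · exact (Finset.lt_inf'_iff hse).mpr (fun a _ => half_pos (hr a))
    · intro a ha b hab
      rcases mem_iUnion₂.mp (hs ha) with ⟨a₀, ha₀, haball⟩
      have h1 : dist a₀ a < r a₀ := lt_of_lt_of_le (mem_ball'.mp haball) (half_le_self (hr a₀).le)
      have h2 : dist a₀ b < r a₀ := by
        have : s.inf' hse (fun a => r a / 2) ≤ r a₀ / 2 := Finset.inf'_le _ ha₀
        calc dist a₀ b ≤ dist a₀ a + dist a b := dist_triangle _ _ _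
          _ < r a₀ / 2 + r a₀ / 2 := add_lt_add (mem_ball'.mp haball) (lt_of_lt_of_le hab this)
          _ = r a₀ := add_halves _
      calc dist (f a) (f b) ≤ dist (f a) (f a₀) + dist (f a₀) (f b) := dist_triangle _ _ _
        _ < ε / 2 + ε / 2 := add_lt_add (dist_comm (f a₀) (f a) ▸ hball a₀ a h1) (hball a₀ b h2)
        _ = ε := add_halves _

section Chains
variable {Ω M U : Type*} [MetricSpace Ω] [MetricSpace M]
variable (σ : ℝ → Ω → Ω) (φ : ℝ → Ω → M → U → M) (Q : Set M)

/-- One chain step with bounded time and trajectory in `Q`. -/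
def StepQ (ε T : ℝ) (p q : Ω × M) : Prop :=
  ∃ (u : U) (S : ℝ), T ≤ S ∧ S ≤ 2 * T ∧ σ S p.1 = q.1 ∧
    dist (φ S p.1 p.2 u) q.2 < ε ∧ ∀ t ∈ Set.Icc (0 : ℝ) S, φ t p.1 p.2 u ∈ Q

/-- One chain step, no trajectory constraint. -/
def StepE (ε T : ℝ) (p q : Ω × M) : Prop :=
  ∃ (u : U) (S : ℝ), T ≤ S ∧ σ S p.1 = q.1 ∧ dist (φ S p.1 p.2 u) q.2 < ε

variable (θ : ℝ → U → U)

/-- Subdivision of a single long trajectory segment into `StepQ`-steps. -/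
lemma transGen_segment
    (hσ0 : ∀ ω : Ω, σ 0 ω = ω)
    (hσadd : ∀ (t s : ℝ) (ω : Ω), σ (t + s) ω = σ s (σ t ω))
    (hφ0 : ∀ (ω : Ω) (x : M) (u : U), φ 0 ω x u = x)
    (hφadd : ∀ (t s : ℝ) (ω : Ω) (x : M) (u : U),
      φ (t + s) ω x u = φ s (σ t ω) (φ t ω x u) (θ t u))
    {ε T : ℝ} (hε : 0 < ε) (hT : 0 < T)
    (ω₀ : Ω) (x₀ : M) (u : U) (S : ℝ) (y : M)
    (hTS : T ≤ S) (htraj : ∀ t ∈ Set.Icc (0 : ℝ) S, φ t ω₀ x₀ u ∈ Q)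
    (hjump : dist (φ S ω₀ x₀ u) y < ε) :
    Relation.TransGen (StepQ σ φ Q ε T) (ω₀, x₀) (σ S ω₀, y) := by
  set m : ℕ := ⌊S / T⌋₊ with hm
  have hS0 : 0 ≤ S := le_trans hT.le hTS
  have hm1 : 1 ≤ m := Nat.le_floor (by rw [le_div_iff₀ hT]; simpa using hTS)
  have hmpos : (0 : ℝ) < m := by exact_mod_cast Nat.pos_of_ne_zero (by omega)
  set τ : ℝ := S / m with hτ
  have hmτ : (m : ℝ) * τ = S := by rw [hτ]; field_simp
  have hTτ : T ≤ τ := by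
    rw [hτ, le_div_iff₀ hmpos]
    calc T * m ≤ (S / T) * T := by
          rw [mul_comm]
          exact mul_le_mul_of_nonneg_right (Nat.floor_le (by positivity)) hT.le
      _ = S := by field_simp
  have hτ2T : τ ≤ 2 * T := by
    rw [hτ, div_le_iff₀ hmpos]
    have h1 : S / T < m + 1 := Nat.lt_floor_add_one _
    have h2 : S < (m + 1) * T := by
      rw [← div_lt_iff₀ hT] at *
      linarith [h1]
    have h3 : ((m : ℝ) + 1) ≤ 2 * m := by
      have : (1 : ℝ) ≤ m := by exact_mod_cast hm1
      linarith
    have : ((m : ℝ) + 1) * T ≤ 2 * T * m := by nlinarith [hT.le]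
    linarith
  have hτpos : 0 < τ := lt_of_lt_of_le hT hTτ
  have key : ∀ k : ℕ, (k : ℝ) * τ ≤ S →
      Relation.ReflTransGen (StepQ σ φ Q ε T) (ω₀, x₀)
        (σ ((k : ℝ) * τ) ω₀, φ ((k : ℝ) * τ) ω₀ x₀ u) := by
    intro k
    induction k with
    | zero =>
      intro _
      simp only [Nat.cast_zero, zero_mul, hσ0, hφ0]
      exact Relation.ReflTransGen.refl
    | succ k ih =>
      intro hk1
      have hkk : (k : ℝ) * τ ≤ S := by
        push_cast at hk1 ⊢
        nlinarith [hτpos]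
      refine Relation.ReflTransGen.tail (ih hkk) ?_
      refine ⟨θ ((k : ℝ) * τ) u, τ, hTτ, hτ2T, ?_, ?_, ?_⟩
      · show σ τ (σ ((k : ℝ) * τ) ω₀) = σ (((k + 1 : ℕ) : ℝ) * τ) ω₀
        rw [← hσadd]
        congr 1
        push_cast
        ring
      · show dist (φ τ (σ ((k : ℝ) * τ) ω₀) (φ ((k : ℝ) * τ) ω₀ x₀ u) (θ ((k : ℝ) * τ) u))
            (φ (((k + 1 : ℕ) : ℝ) * τ) ω₀ x₀ u) < ε
        rw [← hφadd]
        have harg : ((k : ℝ) * τ + τ) = (((k + 1 : ℕ) : ℝ) * τ) := by push_cast; ring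
        rw [harg, dist_self]
        exact hε
      · show ∀ t ∈ Set.Icc (0 : ℝ) τ,
            φ t (σ ((k : ℝ) * τ) ω₀) (φ ((k : ℝ) * τ) ω₀ x₀ u) (θ ((k : ℝ) * τ) u) ∈ Q
        intro t ht
        rw [← hφadd]
        apply htraj
        constructor
        · have : (0:ℝ) ≤ (k : ℝ) * τ := by positivity
          linarith [ht.1]
        · have h1 : (k : ℝ) * τ + t ≤ (k : ℝ) * τ + τ := by linarith [ht.2]
          have h2 : ((k : ℝ) + 1) * τ = ((k + 1 : ℕ) : ℝ) * τ := by push_cast; ring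
          have : ((k + 1 : ℕ) : ℝ) * τ ≤ S := hk1
          nlinarith
  have hcast : ((m - 1 : ℕ) : ℝ) = (m : ℝ) - 1 := by
    push_cast [Nat.cast_sub hm1]
    ring
  have hsum : ((m - 1 : ℕ) : ℝ) * τ + τ = S := by
    rw [hcast, ← hmτ]; ring
  have hle : ((m - 1 : ℕ) : ℝ) * τ ≤ S := by
    rw [hcast]
    nlinarith [hmτ, hτpos]
  refine Relation.TransGen.tail' (key (m - 1) hle) ?_
  refine ⟨θ (((m - 1 : ℕ) : ℝ) * τ) u, τ, hTτ, hτ2T, ?_, ?_, ?_⟩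
  · show σ τ (σ (((m - 1 : ℕ) : ℝ) * τ) ω₀) = σ S ω₀
    rw [← hσadd, hsum]
  · show dist (φ τ (σ (((m - 1 : ℕ) : ℝ) * τ) ω₀)
        (φ (((m - 1 : ℕ) : ℝ) * τ) ω₀ x₀ u) (θ (((m - 1 : ℕ) : ℝ) * τ) u)) y < ε
    rw [← hφadd, hsum]
    exact hjump
  · show ∀ t ∈ Set.Icc (0 : ℝ) τ,
        φ t (σ (((m - 1 : ℕ) : ℝ) * τ) ω₀) (φ (((m - 1 : ℕ) : ℝ) * τ) ω₀ x₀ u)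
          (θ (((m - 1 : ℕ) : ℝ) * τ) u) ∈ Q
    intro t ht
    rw [← hφadd]
    apply htraj
    constructor
    · have : (0:ℝ) ≤ ((m - 1 : ℕ) : ℝ) * τ := by positivity
      linarith [ht.1]
    · have : ((m - 1 : ℕ) : ℝ) * τ + t ≤ ((m - 1 : ℕ) : ℝ) * τ + τ := by linarith [ht.2]
      linarith [hsum]

/-- A chain in `Q` gives a `StepQ`-path. -/
lemma transGen_of_chainIn
    (hσ0 : ∀ ω : Ω, σ 0 ω = ω)
    (hσadd : ∀ (t s : ℝ) (ω : Ω), σ (t + s) ω = σ s (σ t ω))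
    (hφ0 : ∀ (ω : Ω) (x : M) (u : U), φ 0 ω x u = x)
    (hφadd : ∀ (t s : ℝ) (ω : Ω) (x : M) (u : U),
      φ (t + s) ω x u = φ s (σ t ω) (φ t ω x u) (θ t u))
    {ε T : ℝ} (hε : 0 < ε) (hT : 0 < T) {p q : Ω × M}
    (h : ControlledChainIn σ φ Q ε T p q) :
    ∃ r : Ω × M, Relation.TransGen (StepQ σ φ Q ε T) p r ∧ dist r.1 q.1 < ε ∧ r.2 = q.2 := by
  obtain ⟨n, ωc, xc, u, Tt, hn, hω0, hx0, hxl, hTt, hflow, hbase, hjump, htraj⟩ := h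
  have H : ∀ j : Fin (n+1), 0 < (j : ℕ) →
      Relation.TransGen (StepQ σ φ Q ε T) p (ωc j, xc j) := by
    intro j
    induction j using Fin.induction with
    | zero => intro hcon; simp at hcon
    | succ i ih =>
      intro _
      have hseg : Relation.TransGen (StepQ σ φ Q ε T)
          (ωc i.castSucc, xc i.castSucc) (ωc i.succ, xc i.succ) := by
        have := transGen_segment σ φ Q θ hσ0 hσadd hφ0 hφadd hε hT
          (ωc i.castSucc) (xc i.castSucc) (u i) (Tt i) (xc i.succ)
          (hTt i) (htraj i) (hjump i)
        rwa [hflow i] at this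
      rcases Nat.eq_zero_or_pos (i.castSucc : ℕ) with h0 | hpos
      · have h00 : i.castSucc = 0 := Fin.ext h0
        rw [h00] at hseg
        have hp : (ωc 0, xc 0) = p := by rw [hω0, hx0]
        rwa [hp] at hseg
      · exact (ih hpos).trans hseg
  exact ⟨(ωc (Fin.last n), xc (Fin.last n)), H (Fin.last n) (by simpa using hn), hbase, hxl⟩

/-- A `StepE`-path gives a controlled chain. -/
lemma chain_of_transGen {ε' ε T : ℝ} (hε' : 0 < ε') {p r : Ω × M}
    (h : Relation.TransGen (StepE σ φ ε' T) p r) (q : Ω × M)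
    (hq1 : dist r.1 q.1 < ε) (hq2 : dist r.2 q.2 ≤ ε - ε') :
    ControlledChain σ φ ε T p q := by
  have H : ∃ (n : ℕ) (ωc : Fin (n+1) → Ω) (xc : Fin (n+1) → M) (u : Fin n → U) (Tt : Fin n → ℝ),
      0 < n ∧ ωc 0 = p.1 ∧ xc 0 = p.2 ∧ ωc (Fin.last n) = r.1 ∧ xc (Fin.last n) = r.2 ∧
      (∀ j, T ≤ Tt j) ∧ (∀ j, σ (Tt j) (ωc (Fin.castSucc j)) = ωc (Fin.succ j)) ∧
      (∀ j, dist (φ (Tt j) (ωc (Fin.castSucc j)) (xc (Fin.castSucc j)) (u j))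
        (xc (Fin.succ j)) < ε') := by
    clear hq1 hq2
    induction h with
    | @single b hstep =>
      obtain ⟨u₀, S, hTS, hbase, hjump⟩ := hstep
      refine ⟨1, ![p.1, b.1], ![p.2, b.2], ![u₀], ![S], one_pos, rfl, rfl, rfl, rfl,
        ?_, ?_, ?_⟩ <;>
      · intro j
        fin_cases j
        simpa using (by assumption : _)
    | @tail b c hab hbc ih =>
      obtain ⟨n, ωc, xc, u, Tt, hn, hω0, hx0, hωl, hxl, hTt, hflow, hjump⟩ := ih
      obtain ⟨u₀, S, hTS, hbase, hjump₀⟩ := hbc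
      refine ⟨n + 1, Fin.snoc ωc c.1, Fin.snoc xc c.2, Fin.snoc u u₀, Fin.snoc Tt S,
        by omega, ?_, ?_, ?_, ?_, ?_, ?_, ?_⟩
      · exact (@Fin.snoc_castSucc (n+1) (fun _ => Ω) c.1 ωc 0).trans hω0
      · exact (@Fin.snoc_castSucc (n+1) (fun _ => M) c.2 xc 0).trans hx0
      · exact Fin.snoc_last _ _
      · exact Fin.snoc_last _ _
      · intro j
        induction j using Fin.lastCases with
        | last => rw [Fin.snoc_last]; exact hTS
        | cast i => rw [Fin.snoc_castSucc]; exact hTt i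
      · intro j
        induction j using Fin.lastCases with
        | last =>
          rw [show (Fin.last n).succ = Fin.last (n+1) from rfl]
          simp only [Fin.snoc_last, Fin.snoc_castSucc, hωl]
          exact hbase
        | cast i =>
          simp only [Fin.snoc_castSucc, Fin.succ_castSucc]
          exact hflow i
      · intro j
        induction j using Fin.lastCases with
        | last =>
          rw [show (Fin.last n).succ = Fin.last (n+1) from rfl]
          simp only [Fin.snoc_last, Fin.snoc_castSucc, hωl, hxl]
          exact hjump₀
        | cast i =>
          simp only [Fin.snoc_castSucc, Fin.succ_castSucc]
          exact hjump i
  obtain ⟨n, ωc, xc, u, Tt, hn, hω0, hx0, hωl, hxl, hTt, hflow, hjump⟩ := H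
  have hεε' : ε' ≤ ε := by
    have := dist_nonneg (x := r.2) (y := q.2)
    linarith
  refine ⟨n, ωc, Function.update xc (Fin.last n) q.2, u, Tt, hn, hω0, ?_, ?_, hTt, hflow, ?_, ?_⟩
  · rw [Function.update_of_ne (by simp [Fin.ext_iff]; omega) _ _]
    exact hx0
  · rw [Function.update_self]
  · rw [hωl]; exact hq1
  · intro j
    rw [Function.update_of_ne (Fin.castSucc_lt_last j).ne _ _]
    by_cases hjl : j.succ = Fin.last n
    · rw [hjl, Function.update_self]
      calc dist (φ (Tt j) (ωc j.castSucc) (xc j.castSucc) (u j)) q.2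
          ≤ dist (φ (Tt j) (ωc j.castSucc) (xc j.castSucc) (u j)) (xc j.succ)
            + dist (xc j.succ) q.2 := dist_triangle _ _ _
        _ < ε' + (ε - ε') := by
            refine add_lt_add_of_lt_of_le (hjump j) ?_
            rw [hjl, hxl]; exact hq2
        _ = ε := by ring
    · rw [Function.update_of_ne hjl _ _]
      exact lt_of_lt_of_le (hjump j) hεε'

/-- One perturbed step. -/
lemma perturb_step
    (hσadd : ∀ (t s : ℝ) (ω : Ω), σ (t + s) ω = σ s (σ t ω))
    {T ε₁ ε' δ₀ δstar : ℝ} (hT : 0 < T) (hδ₀ : 0 < δ₀)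
    (hδstar : δstar ≤ δ₀) (hε₁ : ε₁ ≤ δstar)
    (p p' : Ω × M)
    (hbase : ∀ s : ℝ, dist (σ s p.1) (σ s p'.1) < δstar)
    (hUC : ∀ t ∈ Set.Icc (0 : ℝ) (2 * T), ∀ (ω : Ω) (x : M) (u : U) (ω' : Ω) (x' : M),
      x ∈ Q → dist ω' ω < δ₀ → dist x' x < δ₀ →
      dist (φ t ω' x' u) (φ t ω x u) < ε')
    {b c : Ω × M} (hbc : StepQ σ φ Q ε₁ T b c)
    (s' : ℝ) (y' : M) (hb1 : b.1 = σ s' p'.1) (hy'Q : y' ∈ Q)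
    (hy'd : dist y' b.2 < δstar) :
    ∃ (s'' : ℝ) (y'' : M),
      StepE σ φ (2 * ε') T (σ s' p.1, y') (σ s'' p.1, y'') ∧
      c.1 = σ s'' p'.1 ∧ y'' ∈ Q ∧ dist y'' c.2 < δstar := by
  obtain ⟨u₀, S, hTS, hS2T, hflow, hjump, htraj⟩ := hbc
  have hS0 : (0 : ℝ) ≤ S := le_trans hT.le hTS
  have hSmem : S ∈ Set.Icc (0 : ℝ) (2 * T) := ⟨hS0, hS2T⟩
  have h1 : dist (φ S (σ s' p.1) y' u₀) (φ S b.1 y' u₀) < ε' := by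
    refine hUC S hSmem b.1 y' u₀ (σ s' p.1) y' hy'Q ?_ (by simpa using hδ₀)
    rw [hb1]
    exact (hbase s').trans_le hδstar
  have h2 : dist (φ S b.1 b.2 u₀) (φ S b.1 y' u₀) < ε' := by
    refine hUC S hSmem b.1 y' u₀ b.1 b.2 hy'Q (by simpa using hδ₀) ?_
    rw [dist_comm]
    exact hy'd.trans_le hδstar
  refine ⟨s' + S, φ S b.1 b.2 u₀, ⟨u₀, S, hTS, by rw [← hσadd], ?_⟩, ?_, ?_, ?_⟩
  · calc dist (φ S (σ s' p.1) y' u₀) (φ S b.1 b.2 u₀)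
        ≤ dist (φ S (σ s' p.1) y' u₀) (φ S b.1 y' u₀)
          + dist (φ S b.1 y' u₀) (φ S b.1 b.2 u₀) := dist_triangle _ _ _
      _ < ε' + ε' := add_lt_add h1 (dist_comm (φ S b.1 b.2 u₀) (φ S b.1 y' u₀) ▸ h2)
      _ = 2 * ε' := by ring
  · rw [← hflow, hb1, ← hσadd]
  · exact htraj S ⟨hS0, le_refl S⟩
  · exact lt_of_lt_of_le hjump hε₁

/-- Perturbation of a whole `StepQ`-chain. -/
lemma perturb
    (hσadd : ∀ (t s : ℝ) (ω : Ω), σ (t + s) ω = σ s (σ t ω))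
    {T ε₁ ε' δ₀ δstar : ℝ} (hT : 0 < T) (hδ₀ : 0 < δ₀)
    (hδstar : δstar ≤ δ₀) (hε₁ : ε₁ ≤ δstar)
    (p p' : Ω × M)
    (hbase : ∀ s : ℝ, dist (σ s p.1) (σ s p'.1) < δstar)
    (hUC : ∀ t ∈ Set.Icc (0 : ℝ) (2 * T), ∀ (ω : Ω) (x : M) (u : U) (ω' : Ω) (x' : M),
      x ∈ Q → dist ω' ω < δ₀ → dist x' x < δ₀ →
      dist (φ t ω' x' u) (φ t ω x u) < ε')
    {a b : Ω × M} (h : Relation.TransGen (StepQ σ φ Q ε₁ T) a b) :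
    ∀ (s : ℝ) (x' : M), a.1 = σ s p'.1 → x' ∈ Q → dist x' a.2 < δstar →
      ∃ (s' : ℝ) (y' : M),
        Relation.TransGen (StepE σ φ (2 * ε') T) (σ s p.1, x') (σ s' p.1, y') ∧
        b.1 = σ s' p'.1 ∧ y' ∈ Q ∧ dist y' b.2 < δstar := by
  induction h with
  | @single b hstep =>
    intro s x' ha1 hx'Q hx'd
    obtain ⟨s'', y'', hstepE, hb1, hyQ, hyd⟩ :=
      perturb_step σ φ Q hσadd hT hδ₀ hδstar hε₁ p p' hbase hUC hstep s x' ha1 hx'Q hx'd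
    exact ⟨s'', y'', Relation.TransGen.single hstepE, hb1, hyQ, hyd⟩
  | @tail b c hab hbc ih =>
    intro s x' ha1 hx'Q hx'd
    obtain ⟨s', y', htg, hb1, hy'Q, hy'd⟩ := ih s x' ha1 hx'Q hx'd
    obtain ⟨s'', y'', hstepE, hc1, hyQ, hyd⟩ :=
      perturb_step σ φ Q hσadd hT hδ₀ hδstar hε₁ p p' hbase hUC hbc s' y' hb1 hy'Q hy'd
    exact ⟨s'', y'', Relation.TransGen.tail htg hstepE, hc1, hyQ, hyd⟩

end Chains

/-- Proposition 2.6: if the minimal flow on `Ω` is equicontinuous and the chain control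
set `E ⊆ Ω × Q` (with `Q ⊆ M` compact) is chain controllable in `Ω × Q`, then `E` is
compact. -/
theorem chainControlSet_compact {Ω M U : Type*} [MetricSpace Ω] [CompactSpace Ω]
    [MetricSpace M] [MetricSpace U] [CompactSpace U]
    (σ : ℝ → Ω → Ω) (θ : ℝ → U → U) (φ : ℝ → Ω → M → U → M)
    (hσ0 : ∀ ω : Ω, σ 0 ω = ω)
    (hσadd : ∀ (t s : ℝ) (ω : Ω), σ (t + s) ω = σ s (σ t ω))
    (hσcont : Continuous fun p : ℝ × Ω => σ p.1 p.2)
    (hθ0 : ∀ u : U, θ 0 u = u)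
    (hθadd : ∀ (t s : ℝ) (u : U), θ (t + s) u = θ s (θ t u))
    (hθcont : Continuous fun p : ℝ × U => θ p.1 p.2)
    (hφ0 : ∀ (ω : Ω) (x : M) (u : U), φ 0 ω x u = x)
    (hφadd : ∀ (t s : ℝ) (ω : Ω) (x : M) (u : U),
      φ (t + s) ω x u = φ s (σ t ω) (φ t ω x u) (θ t u))
    (hφcont : Continuous fun p : ℝ × Ω × M × U => φ p.1 p.2.1 p.2.2.1 p.2.2.2)
    (hσmin : ∀ A : Set Ω, IsClosed A → A.Nonempty → (∀ t : ℝ, σ t '' A = A) → A = Set.univ)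
    (hequi : ∀ ε : ℝ, 0 < ε → ∃ δ : ℝ, 0 < δ ∧
      ∀ (t : ℝ) (ω₁ ω₂ : Ω), dist ω₁ ω₂ < δ → dist (σ t ω₁) (σ t ω₂) < ε)
    (Q : Set M) (hQ : IsCompact Q)
    (E : Set (Ω × M)) (hE : IsChainControlSet σ φ E)
    (hEQ : E ⊆ Set.univ ×ˢ Q)
    (hEin : ∀ p ∈ E, ∀ q ∈ E, ∀ ε T : ℝ, 0 < ε → 0 < T →
      ControlledChainIn σ φ Q ε T p q) :
    IsCompact E := by
  obtain ⟨hEne, hEinv, hEchain, hEmax⟩ := hE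
  have hQclosed : IsClosed (Set.univ ×ˢ Q : Set (Ω × M)) := isClosed_univ.prod hQ.isClosed
  have hclQ : closure E ⊆ Set.univ ×ˢ Q := closure_minimal hEQ hQclosed
  -- (i) for the closure
  have hinv : ∀ p ∈ closure E, ∃ u : U, ∀ t : ℝ, (σ t p.1, φ t p.1 p.2 u) ∈ closure E := by
    intro p hp
    obtain ⟨x, hxE, hxlim⟩ := mem_closure_iff_seq_limit.mp hp
    choose useq huseq using fun n => hEinv (x n) (hxE n)
    obtain ⟨u, -, k, hk, hulim⟩ :=
      (isCompact_univ (X := U)).tendsto_subseq (x := useq) (fun n => mem_univ _)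
    refine ⟨u, fun t => ?_⟩
    have hxk : Filter.Tendsto (fun n => x (k n)) Filter.atTop (nhds p) :=
      hxlim.comp hk.tendsto_atTop
    have hω : Filter.Tendsto (fun n => (x (k n)).1) Filter.atTop (nhds p.1) :=
      (continuous_fst.tendsto p).comp hxk
    have hm : Filter.Tendsto (fun n => (x (k n)).2) Filter.atTop (nhds p.2) :=
      (continuous_snd.tendsto p).comp hxk
    have h1 : Filter.Tendsto
        (fun n => (σ t (x (k n)).1, φ t (x (k n)).1 (x (k n)).2 (useq (k n))))
        Filter.atTop (nhds (σ t p.1, φ t p.1 p.2 u)) := by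
      refine Filter.Tendsto.prodMk_nhds ?_ ?_
      · exact (hσcont.tendsto (t, p.1)).comp (tendsto_const_nhds.prodMk_nhds hω)
      · exact (hφcont.tendsto (t, p.1, p.2, u)).comp
          (tendsto_const_nhds.prodMk_nhds (hω.prodMk_nhds (hm.prodMk_nhds hulim)))
    exact mem_closure_of_tendsto h1
      (Filter.Eventually.of_forall fun n => huseq (k n) t)
  -- (ii) for the closure
  have hchain : ∀ p ∈ closure E, ∀ q ∈ closure E, ∀ ε T : ℝ, 0 < ε → 0 < T →
      ControlledChain σ φ ε T p q := by
    intro p hp q hq ε T hε hT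
    -- uniform continuity constant on a compact neighborhood of the chain data
    obtain ⟨δ₀, hδ₀, hUC₀⟩ := uc_aux
      (f := fun z : ℝ × Ω × M × U => φ z.1 z.2.1 z.2.2.1 z.2.2.2) hφcont
      (K := Set.Icc (0:ℝ) (2*T) ×ˢ (Set.univ : Set Ω) ×ˢ Q ×ˢ (Set.univ : Set U))
      (isCompact_Icc.prod (isCompact_univ.prod (hQ.prod isCompact_univ)))
      (ε := ε/8) (by positivity)
    have hUC : ∀ t ∈ Set.Icc (0 : ℝ) (2 * T), ∀ (ω : Ω) (x : M) (u : U) (ω' : Ω) (x' : M),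
        x ∈ Q → dist ω' ω < δ₀ → dist x' x < δ₀ →
        dist (φ t ω' x' u) (φ t ω x u) < ε/8 := by
      intro t ht ω x u ω' x' hxQ h1 h2
      have hab : dist ((t, ω, x, u) : ℝ × Ω × M × U) (t, ω', x', u) < δ₀ := by
        simp only [Prod.dist_eq, dist_self]
        rw [dist_comm ω ω', dist_comm x x']
        simp only [sup_lt_iff]
        exact ⟨hδ₀, h1, h2, hδ₀⟩
      have := hUC₀ (t, ω, x, u) ⟨ht, mem_univ _, hxQ, mem_univ _⟩ (t, ω', x', u) hab
      rw [dist_comm]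
      exact this
    set δstar := min δ₀ (ε/8) with hδstardef
    have hδstarpos : 0 < δstar := lt_min hδ₀ (by positivity)
    have hδstarle : δstar ≤ δ₀ := min_le_left _ _
    have hδstarε : δstar ≤ ε/8 := min_le_right _ _
    obtain ⟨δeq, hδeqpos, hequi'⟩ := hequi δstar hδstarpos
    set δ := min δeq δstar with hδdef
    have hδpos : 0 < δ := lt_min hδeqpos hδstarpos
    obtain ⟨p', hp'E, hpp'⟩ := Metric.mem_closure_iff.mp hp δ hδpos
    obtain ⟨q', hq'E, hqq'⟩ := Metric.mem_closure_iff.mp hq δ hδpos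
    have hp1 : dist p.1 p'.1 < δ :=
      lt_of_le_of_lt (by rw [Prod.dist_eq]; exact le_sup_left) hpp'
    have hp2 : dist p.2 p'.2 < δ :=
      lt_of_le_of_lt (by rw [Prod.dist_eq]; exact le_sup_right) hpp'
    have hq1 : dist q.1 q'.1 < δ :=
      lt_of_le_of_lt (by rw [Prod.dist_eq]; exact le_sup_left) hqq'
    have hq2 : dist q.2 q'.2 < δ :=
      lt_of_le_of_lt (by rw [Prod.dist_eq]; exact le_sup_right) hqq'
    have hbase : ∀ s : ℝ, dist (σ s p.1) (σ s p'.1) < δstar :=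
      fun s => hequi' s p.1 p'.1 (hp1.trans_le (min_le_left _ _))
    -- chain in Q from p' to q', subdivided
    obtain ⟨r, htg, hr1, hr2⟩ := transGen_of_chainIn σ φ Q θ hσ0 hσadd hφ0 hφadd
      hδstarpos hT (hEin p' hp'E q' hq'E δstar T hδstarpos hT)
    -- perturb the chain so that it starts at p
    have hpQ : p.2 ∈ Q := (hclQ hp).2
    have hp'Q : p'.2 ∈ Q := (hEQ hp'E).2
    obtain ⟨s', y', htgE, hb1, hy'Q, hy'd⟩ := perturb σ φ Q hσadd hT hδ₀ hδstarle
      (le_refl δstar) p p' hbase hUC htg 0 p.2 (hσ0 p'.1).symm hpQ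
      (hp2.trans_le (min_le_right _ _))
    rw [hσ0] at htgE
    have hstart : ((p.1 : Ω), p.2) = p := rfl
    rw [hstart] at htgE
    -- assemble the chain from p to q
    refine chain_of_transGen σ φ (ε' := 2 * (ε/8)) (by positivity) htgE q ?_ ?_
    · -- base endpoint
      have hd1 : dist (σ s' p.1) (σ s' p'.1) < δstar := hbase s'
      have hd2 : dist (σ s' p'.1) q'.1 < δstar := by rw [← hb1]; exact hr1
      have hd3 : dist q'.1 q.1 < δ := by rw [dist_comm]; exact hq1
      have hδε : δ ≤ ε/8 := le_trans (min_le_right _ _) hδstarε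
      calc dist ((σ s' p.1, y').1) q.1
          ≤ dist (σ s' p.1) (σ s' p'.1) + dist (σ s' p'.1) q'.1 + dist q'.1 q.1 :=
            dist_triangle4 _ _ _ _
        _ < δstar + δstar + δ := by exact add_lt_add (add_lt_add hd1 hd2) hd3
        _ ≤ ε/8 + ε/8 + ε/8 := by
            exact add_le_add (add_le_add hδstarε hδstarε) hδε
        _ < ε := by linarith
    · -- fiber endpoint
      have hd1 : dist y' r.2 < δstar := hy'd
      have hd2 : dist r.2 q.2 < δ := by rw [hr2, dist_comm]; exact hq2
      have hδε : δ ≤ ε/8 := le_trans (min_le_right _ _) hδstarε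
      calc dist ((σ s' p.1, y').2) q.2
          ≤ dist y' r.2 + dist r.2 q.2 := dist_triangle _ _ _
        _ ≤ δstar + δ := by exact add_le_add hd1.le hd2.le
        _ ≤ ε/8 + ε/8 := add_le_add hδstarε hδε
        _ ≤ ε - 2 * (ε/8) := by linarith
  -- maximality: the closure coincides with `E`
  have hcl : closure E = E := hEmax (closure E) subset_closure hinv hchain
  have hclosed : IsClosed E := hcl ▸ isClosed_closure
  exact (isCompact_univ.prod hQ).of_isClosed_subset hclosed hEQ
end

section
/- Let $(\omega,x) \in \Omega \times M$ and $(\bar\omega,y) \in \mathbf{R}^c(\omega,x)$. Then there exists a control $v \in \mathcal{U}$ such that $(\bar\omega \cdot \tau, \varphi(\tau,\bar\omega,y,v)) \in \mathbf{R}^c(\omega,x)$ for all $\tau < 0$. -/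
open Metric Set

/-- The chain reachable set from `(ω, x)`. -/
def ChainReachable {Ω M U : Type*} [MetricSpace Ω] [MetricSpace M]
    (σ : ℝ → Ω → Ω) (φ : ℝ → Ω → M → U → M) (p : Ω × M) : Set (Ω × M) :=
  {q | ∀ ε T : ℝ, 0 < ε → 0 < T → ControlledChain σ φ ε T p q}

/-!
Take controlled `(1/(k+1), k+1)`-chains from `p` to `q`. The last piece of the `k`-th chain runs
for a time `t_k ≥ k+1` under a control `u_k` and ends near `q`; by compactness of `U` the shifted
controls `θ (t_k) u_k` converge along a subsequence to some `v`. Shortening that last piece by `τ`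
still leaves it longer than any prescribed `T` once `k` is large, and by the cocycle property the
shortened piece ends at `φ τ` applied to the old endpoint and `θ (t_k) u_k`, which tends to
`(σ τ q.1, φ τ q.1 q.2 v)` by continuity.
-/

open Filter Topology

section Prefix

variable {Ω M U : Type*} [MetricSpace M]

/-- A controlled `(ε,T)`-chain from `p` landing exactly on `r`, possibly without any jump:
what is left of a `ControlledChain` once its last jump is cut off. -/
def ControlledChainPrefix (σ : ℝ → Ω → Ω) (φ : ℝ → Ω → M → U → M) (ε T : ℝ) (p r : Ω × M) :
    Prop :=
  ∃ (m : ℕ) (ωc : Fin (m + 1) → Ω) (xc : Fin (m + 1) → M) (u : Fin m → U) (Tt : Fin m → ℝ),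
    ωc 0 = p.1 ∧ xc 0 = p.2 ∧ ωc (Fin.last m) = r.1 ∧ xc (Fin.last m) = r.2 ∧
    (∀ j : Fin m, T ≤ Tt j) ∧
    (∀ j : Fin m, σ (Tt j) (ωc j.castSucc) = ωc j.succ) ∧
    ∀ j : Fin m, dist (φ (Tt j) (ωc j.castSucc) (xc j.castSucc) (u j)) (xc j.succ) < ε

variable {σ : ℝ → Ω → Ω} {φ : ℝ → Ω → M → U → M}

theorem ControlledChainPrefix.mono {ε ε' T T' : ℝ} {p r : Ω × M}
    (h : ControlledChainPrefix σ φ ε T p r) (hε : ε ≤ ε') (hT : T' ≤ T) :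
    ControlledChainPrefix σ φ ε' T' p r := by
  obtain ⟨m, ωc, xc, u, Tt, hω0, hx0, hωr, hxr, hTt, hσ, hjump⟩ := h
  exact ⟨m, ωc, xc, u, Tt, hω0, hx0, hωr, hxr, fun j => hT.trans (hTt j), hσ,
    fun j => (hjump j).trans_le hε⟩

theorem controlledChain_iff_exists_prefix [MetricSpace Ω] {ε T : ℝ} {p q : Ω × M} :
    ControlledChain σ φ ε T p q ↔ ∃ (r : Ω × M) (u : U) (t : ℝ),
      ControlledChainPrefix σ φ ε T p r ∧ T ≤ t ∧
        dist (σ t r.1) q.1 < ε ∧ dist (φ t r.1 r.2 u) q.2 < ε := by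
  constructor
  · rintro ⟨n, ωc, xc, u, Tt, hn, hω0, hx0, hxq, hTt, hσ, hωq, hjump⟩
    obtain ⟨m, rfl⟩ := Nat.exists_eq_add_one_of_ne_zero hn.ne'
    refine ⟨(ωc (Fin.last m).castSucc, xc (Fin.last m).castSucc), u (Fin.last m),
      Tt (Fin.last m), ⟨m, fun i => ωc i.castSucc, fun i => xc i.castSucc,
        fun j => u j.castSucc, fun j => Tt j.castSucc, hω0, hx0, rfl, rfl,
        fun j => hTt _, fun j => ?_, fun j => ?_⟩, hTt _, ?_, ?_⟩
    · simpa only [Fin.succ_castSucc] using hσ j.castSucc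
    · simpa only [Fin.succ_castSucc] using hjump j.castSucc
    · simpa only [hσ, Fin.succ_last] using hωq
    · simpa only [hxq, Fin.succ_last] using hjump (Fin.last m)
  · rintro ⟨r, u₀, t, ⟨m, ωc, xc, u, Tt, hω0, hx0, hωr, hxr, hTt, hσ, hjump⟩, ht, hωq, hxq⟩
    refine ⟨m + 1, Fin.snoc ωc (σ t r.1), Fin.snoc xc q.2, Fin.snoc u u₀, Fin.snoc Tt t,
      m.succ_pos, by simpa using hω0, by simpa using hx0, by simp, fun j => ?_, fun j => ?_,
      by simpa using hωq, fun j => ?_⟩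
    · cases j using Fin.lastCases <;> simp [ht, hTt]
    · cases j using Fin.lastCases with
      | last => simp [hωr]
      | cast i => simpa only [Fin.snoc_castSucc, Fin.succ_castSucc] using hσ i
    · cases j using Fin.lastCases with
      | last => simpa [hωr, hxr] using hxq
      | cast i => simpa only [Fin.snoc_castSucc, Fin.succ_castSucc] using hjump i

theorem mem_chainReachable_of_tendsto [MetricSpace Ω] {ι : Type*} {l : Filter ι} [l.NeBot]
    {ε T t : ι → ℝ} {r : ι → Ω × M} {u : ι → U} {p q : Ω × M}
    (hpre : ∀ i, ControlledChainPrefix σ φ (ε i) (T i) p (r i))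
    (hε : Tendsto ε l (𝓝 0)) (hT : Tendsto T l atTop) (ht : Tendsto t l atTop)
    (hlim : Tendsto (fun i => (σ (t i) (r i).1, φ (t i) (r i).1 (r i).2 (u i))) l (𝓝 q)) :
    q ∈ ChainReachable σ φ p := by
  intro ε' T' hε' _
  obtain ⟨i, hεi, hTi, hti, hωi, hxi⟩ := ((hε.eventually_lt_const hε').and
    ((hT.eventually_ge_atTop T').and ((ht.eventually_ge_atTop T').and
      ((tendsto_nhds.1 hlim.fst_nhds ε' hε').and (tendsto_nhds.1 hlim.snd_nhds ε' hε'))))).exists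
  exact controlledChain_iff_exists_prefix.2
    ⟨r i, u i, t i, (hpre i).mono hεi.le hTi, hti, hωi, hxi⟩

end Prefix

theorem chainReachable_backward_control_general {Ω M U : Type*} [MetricSpace Ω]
    [MetricSpace M] [MetricSpace U] [CompactSpace U]
    (σ : ℝ → Ω → Ω) (θ : ℝ → U → U) (φ : ℝ → Ω → M → U → M)
    (hσadd : ∀ (t s : ℝ) (ω : Ω), σ (t + s) ω = σ s (σ t ω))
    (hσcont : Continuous fun p : ℝ × Ω => σ p.1 p.2)
    (hφadd : ∀ (t s : ℝ) (ω : Ω) (x : M) (u : U),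
      φ (t + s) ω x u = φ s (σ t ω) (φ t ω x u) (θ t u))
    (hφcont : Continuous fun p : ℝ × Ω × M × U => φ p.1 p.2.1 p.2.2.1 p.2.2.2)
    (p : Ω × M) (q : Ω × M) (hq : q ∈ ChainReachable σ φ p) :
    ∃ v : U, ∀ τ : ℝ, τ < 0 → (σ τ q.1, φ τ q.1 q.2 v) ∈ ChainReachable σ φ p := by
  choose r u t hpre ht hωq hxq using fun k : ℕ =>
    controlledChain_iff_exists_prefix.1 (hq (1 / (k + 1)) (k + 1) (by positivity) (by positivity))
  have hε : Tendsto (fun k : ℕ => 1 / ((k : ℝ) + 1)) atTop (𝓝 0) :=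
    tendsto_one_div_add_atTop_nhds_zero_nat
  have hT : Tendsto (fun k : ℕ => (k : ℝ) + 1) atTop atTop :=
    tendsto_atTop_add_const_right _ 1 tendsto_natCast_atTop_atTop
  have hω : Tendsto (fun k => σ (t k) (r k).1) atTop (𝓝 q.1) := tendsto_iff_dist_tendsto_zero.2 <|
    squeeze_zero (fun _ => dist_nonneg) (fun k => (hωq k).le) hε
  have hx : Tendsto (fun k => φ (t k) (r k).1 (r k).2 (u k)) atTop (𝓝 q.2) :=
    tendsto_iff_dist_tendsto_zero.2 <| squeeze_zero (fun _ => dist_nonneg) (fun k => (hxq k).le) hε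
  obtain ⟨v, -, ψ, hψ_mono, hv⟩ := isCompact_univ.tendsto_subseq fun k => mem_univ (θ (t k) (u k))
  have hψ := hψ_mono.tendsto_atTop
  refine ⟨v, fun τ _ => ?_⟩
  have hτ : Continuous fun s : Ω × M × U => (σ τ s.1, φ τ s.1 s.2.1 s.2.2) :=
    (hσcont.comp (continuous_const.prodMk continuous_fst)).prodMk
      (hφcont.comp (continuous_const.prodMk continuous_id))
  refine mem_chainReachable_of_tendsto (u := u ∘ ψ) (fun j => hpre (ψ j)) (hε.comp hψ) (hT.comp hψ)
    (tendsto_atTop_add_const_right _ τ (tendsto_atTop_mono (fun j => ht (ψ j)) (hT.comp hψ))) ?_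
  simpa only [hσadd, hφadd, Function.comp_def] using
    (hτ.tendsto _).comp ((hω.comp hψ).prodMk_nhds ((hx.comp hψ).prodMk_nhds hv))

/-- Proposition 2.8(i), backward part: for `(ω̄,y) ∈ 𝐑ᶜ(ω,x)` there exists a control
`v ∈ 𝒰` with `(ω̄·τ, φ(τ,ω̄,y,v)) ∈ 𝐑ᶜ(ω,x)` for all `τ < 0`. -/
theorem chainReachable_backward_control {Ω M U : Type*} [MetricSpace Ω] [CompactSpace Ω]
    [MetricSpace M] [MetricSpace U] [CompactSpace U]
    (σ : ℝ → Ω → Ω) (θ : ℝ → U → U) (φ : ℝ → Ω → M → U → M)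
    (hσ0 : ∀ ω : Ω, σ 0 ω = ω)
    (hσadd : ∀ (t s : ℝ) (ω : Ω), σ (t + s) ω = σ s (σ t ω))
    (hσcont : Continuous fun p : ℝ × Ω => σ p.1 p.2)
    (hθ0 : ∀ u : U, θ 0 u = u)
    (hθadd : ∀ (t s : ℝ) (u : U), θ (t + s) u = θ s (θ t u))
    (hθcont : Continuous fun p : ℝ × U => θ p.1 p.2)
    (hφ0 : ∀ (ω : Ω) (x : M) (u : U), φ 0 ω x u = x)
    (hφadd : ∀ (t s : ℝ) (ω : Ω) (x : M) (u : U),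
      φ (t + s) ω x u = φ s (σ t ω) (φ t ω x u) (θ t u))
    (hφcont : Continuous fun p : ℝ × Ω × M × U => φ p.1 p.2.1 p.2.2.1 p.2.2.2)
    (p : Ω × M) (q : Ω × M) (hq : q ∈ ChainReachable σ φ p) :
    ∃ v : U, ∀ τ : ℝ, τ < 0 → (σ τ q.1, φ τ q.1 q.2 v) ∈ ChainReachable σ φ p :=
  chainReachable_backward_control_general σ θ φ hσadd hσcont hφadd hφcont p q hq
end

section
/- Let $\mathcal{K} \subset \Omega \times M$ be a minimal invariant set for the uncontrolled flow $\tau(t,\omega,x)=(\omega\cdot t,\varphi(t,\omega,x,0))$. Then there exists a (nonautonomous) control set $D$ with $\mathcal{K} \subset D$. -/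
open Metric Set

/-- The extended reachable set from `p = (ω, x)`. -/
def ReachE {Ω M U : Type*} (σ : ℝ → Ω → Ω) (φ : ℝ → Ω → M → U → M)
    (p : Ω × M) : Set (Ω × M) :=
  {q | ∃ t : ℝ, 0 ≤ t ∧ ∃ u : U, q = (σ t p.1, φ t p.1 p.2 u)}

/-- A (nonautonomous) control set: a maximal nonvoid set `D ⊆ Ω × M` such that
(i) every point admits a control keeping the forward trajectory in `D`, and
(ii) `D` is contained in the closure of the extended reachable set of each of its points. -/
def IsControlSet {Ω M U : Type*} [MetricSpace Ω] [MetricSpace M]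
    (σ : ℝ → Ω → Ω) (φ : ℝ → Ω → M → U → M) (D : Set (Ω × M)) : Prop :=
  D.Nonempty ∧
  (∀ p ∈ D, ∃ u : U, ∀ t : ℝ, 0 ≤ t → (σ t p.1, φ t p.1 p.2 u) ∈ D) ∧
  (∀ p ∈ D, D ⊆ closure (ReachE σ φ p)) ∧
  ∀ D' : Set (Ω × M), D ⊆ D' →
    (∀ p ∈ D', ∃ u : U, ∀ t : ℝ, 0 ≤ t → (σ t p.1, φ t p.1 p.2 u) ∈ D') →
    (∀ p ∈ D', D' ⊆ closure (ReachE σ φ p)) →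
    D' = D

/-- Key analytic lemma: for a jointly continuous flow `T` on `Ω × M`, a compact minimal
invariant set `K`, and `p ∈ K`, we have `K ⊆ closure (T · p '' Ici 0)`. -/
lemma key_closure {X : Type*} [MetricSpace X]
    (T : ℝ → X → X)
    (hT0 : ∀ p : X, T 0 p = p)
    (hTadd : ∀ (t s : ℝ) (p : X), T (t + s) p = T s (T t p))
    (hTcont : Continuous fun q : ℝ × X => T q.1 q.2)
    (K : Set X) (hKcomp : IsCompact K)
    (hKinv : ∀ t : ℝ, T t '' K = K)
    (hKmin : ∀ A : Set X, A ⊆ K → IsClosed A → A.Nonempty →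
      (∀ t : ℝ, T t '' A = A) → A = K)
    (p : X) (hp : p ∈ K) :
    K ⊆ closure ((fun r => T r p) '' Ici (0 : ℝ)) := by
  have hTK : ∀ (t : ℝ) {q : X}, q ∈ K → T t q ∈ K := by
    intro t q hq
    rw [← hKinv t]; exact ⟨q, hq, rfl⟩
  have hTct : ∀ t : ℝ, Continuous (T t) := fun t =>
    hTcont.comp (continuous_const.prodMk continuous_id)
  -- homeomorphism
  have hTinv : ∀ (t : ℝ) (q : X), T (-t) (T t q) = q := by
    intro t q; rw [← hTadd, add_neg_cancel, hT0]
  have hTinv' : ∀ (t : ℝ) (q : X), T t (T (-t) q) = q := by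
    intro t q; rw [← hTadd, neg_add_cancel, hT0]
  have hbij : ∀ t : ℝ, Function.Bijective (T t) := by
    intro t
    exact Function.bijective_iff_has_inverse.2 ⟨T (-t), hTinv t, hTinv' t⟩
  have homeo : ∀ t : ℝ, ∃ h : X ≃ₜ X, ⇑h = T t := by
    intro t
    exact ⟨⟨⟨T t, T (-t), hTinv t, hTinv' t⟩, hTct t, hTct (-t)⟩, rfl⟩
  set tail : ℝ → Set X := fun s => (fun r => T r p) '' Ici s with htail
  set A : Set X := ⋂ s : ℝ, closure (tail s) with hA
  have htailK : ∀ s, tail s ⊆ K := by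
    rintro s q ⟨r, _, rfl⟩; exact hTK r hp
  have hclK : ∀ s, closure (tail s) ⊆ K :=
    fun s => hKcomp.isClosed.closure_subset_iff.2 (htailK s)
  have hAK : A ⊆ K := (iInter_subset _ 0).trans (hclK 0)
  -- nonempty
  have hAne : A.Nonempty := by
    refine IsCompact.nonempty_iInter_of_directed_nonempty_isCompact_isClosed _
      ?_ ?_ ?_ ?_
    · intro s1 s2
      refine ⟨max s1 s2, closure_mono (image_mono (Ici_subset_Ici.2 (le_max_left _ _))),
        closure_mono (image_mono (Ici_subset_Ici.2 (le_max_right _ _)))⟩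
    · intro s; exact ⟨T s p, subset_closure ⟨s, le_refl s, rfl⟩⟩
    · intro s; exact hKcomp.of_isClosed_subset isClosed_closure (hclK s)
    · intro s; exact isClosed_closure
  -- invariance
  have himg : ∀ (t s : ℝ), T t '' tail s = tail (s + t) := by
    intro t s
    rw [htail]
    simp only [image_image]
    have : ∀ r : ℝ, T t (T r p) = T (r + t) p := fun r => (hTadd r t p).symm
    calc (fun r => T t (T r p)) '' Ici s = (fun r => T (r + t) p) '' Ici s := by
          simp only [this]
      _ = (fun r => T r p) '' ((fun r => r + t) '' Ici s) := by rw [image_image]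
      _ = tail (s + t) := by rw [image_add_const_Ici]
  have hAinv : ∀ t : ℝ, T t '' A = A := by
    intro t
    obtain ⟨h, hh⟩ := homeo t
    have : T t '' A = ⋂ s : ℝ, closure (tail (s + t)) := by
      rw [hA, image_iInter (hbij t)]
      refine iInter_congr fun s => ?_
      rw [← hh, h.image_closure, hh, himg]
    have reidx : (⋂ s : ℝ, closure (tail (s + t))) = ⋂ s : ℝ, closure (tail s) := by
      ext q
      simp only [mem_iInter]
      constructor
      · intro hq s
        have := hq (s - t)
        rwa [sub_add_cancel] at this
      · intro hq s
        exact hq (s + t)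
    rw [this, reidx, hA]
  have hAeq : A = K := hKmin A hAK (isClosed_iInter fun s => isClosed_closure) hAne hAinv
  calc K = A := hAeq.symm
    _ ⊆ closure (tail 0) := iInter_subset _ 0

/-- Proposition 4.2: every minimal invariant set `𝒦` of the uncontrolled flow
`τ(t,ω,x) = (σ t ω, φ t ω x u₀)` is contained in a control set. -/
theorem minimal_invariant_subset_controlSet {Ω M U : Type*} [MetricSpace Ω] [CompactSpace Ω]
    [MetricSpace M] [MetricSpace U] [CompactSpace U]
    (σ : ℝ → Ω → Ω) (θ : ℝ → U → U) (φ : ℝ → Ω → M → U → M)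
    (hσ0 : ∀ ω : Ω, σ 0 ω = ω)
    (hσadd : ∀ (t s : ℝ) (ω : Ω), σ (t + s) ω = σ s (σ t ω))
    (hσcont : Continuous fun p : ℝ × Ω => σ p.1 p.2)
    (hθ0 : ∀ u : U, θ 0 u = u)
    (hθadd : ∀ (t s : ℝ) (u : U), θ (t + s) u = θ s (θ t u))
    (hθcont : Continuous fun p : ℝ × U => θ p.1 p.2)
    (hφ0 : ∀ (ω : Ω) (x : M) (u : U), φ 0 ω x u = x)
    (hφadd : ∀ (t s : ℝ) (ω : Ω) (x : M) (u : U),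
      φ (t + s) ω x u = φ s (σ t ω) (φ t ω x u) (θ t u))
    (hφcont : Continuous fun p : ℝ × Ω × M × U => φ p.1 p.2.1 p.2.2.1 p.2.2.2)
    (hσmin : ∀ A : Set Ω, IsClosed A → A.Nonempty → (∀ t : ℝ, σ t '' A = A) → A = Set.univ)
    (u0 : U) (hu0 : ∀ t : ℝ, θ t u0 = u0)
    (K : Set (Ω × M)) (hKcomp : IsCompact K) (hKne : K.Nonempty)
    (hKinv : ∀ t : ℝ, (fun p : Ω × M => (σ t p.1, φ t p.1 p.2 u0)) '' K = K)
    (hKmin : ∀ A : Set (Ω × M), A ⊆ K → IsClosed A → A.Nonempty →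
      (∀ t : ℝ, (fun p : Ω × M => (σ t p.1, φ t p.1 p.2 u0)) '' A = A) → A = K) :
    ∃ D : Set (Ω × M), IsControlSet σ φ D ∧ K ⊆ D := by
  classical
  set T : ℝ → Ω × M → Ω × M := fun t p => (σ t p.1, φ t p.1 p.2 u0) with hTdef
  have hT0 : ∀ p, T 0 p = p := by
    intro p; simp [hTdef, hσ0, hφ0]
  have hTadd : ∀ (t s : ℝ) (p : Ω × M), T (t + s) p = T s (T t p) := by
    intro t s p
    simp only [hTdef, hσadd t s, hφadd t s]
    rw [hu0]
  have hTcont : Continuous fun q : ℝ × (Ω × M) => T q.1 q.2 := by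
    apply Continuous.prodMk
    · exact hσcont.comp (continuous_fst.prodMk (continuous_fst.comp continuous_snd))
    · exact hφcont.comp (continuous_fst.prodMk ((continuous_fst.comp continuous_snd).prodMk
        ((continuous_snd.comp continuous_snd).prodMk continuous_const)))
  -- key: K ⊆ closure (ReachE σ φ p) for every p ∈ K
  have hKreach : ∀ p ∈ K, K ⊆ closure (ReachE σ φ p) := by
    intro p hp
    have h := key_closure T hT0 hTadd hTcont K hKcomp hKinv hKmin p hp
    refine h.trans (closure_mono ?_)
    rintro q ⟨r, hr, rfl⟩
    exact ⟨r, hr, u0, rfl⟩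
  have hTK : ∀ (t : ℝ) {q}, q ∈ K → T t q ∈ K := by
    intro t q hq; rw [← hKinv t]; exact ⟨q, hq, rfl⟩
  -- Zorn
  set S : Set (Set (Ω × M)) :=
    {D | K ⊆ D ∧ (∀ p ∈ D, ∃ u : U, ∀ t : ℝ, 0 ≤ t → (σ t p.1, φ t p.1 p.2 u) ∈ D) ∧
      (∀ p ∈ D, D ⊆ closure (ReachE σ φ p))} with hS
  have hKS : K ∈ S := by
    refine ⟨subset_rfl, fun p hp => ⟨u0, fun t ht => hTK t hp⟩, hKreach⟩
  have hchainub : ∀ c ⊆ S, IsChain (· ⊆ ·) c → c.Nonempty →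
      ∃ ub ∈ S, ∀ s ∈ c, s ⊆ ub := by
    intro c hcS hchain hcne
    refine ⟨⋃₀ c, ⟨?_, ?_, ?_⟩, fun s hs => subset_sUnion_of_mem hs⟩
    · obtain ⟨D₀, hD₀⟩ := hcne
      exact (hcS hD₀).1.trans (subset_sUnion_of_mem hD₀)
    · rintro p ⟨D₀, hD₀c, hpD₀⟩
      obtain ⟨u, hu⟩ := (hcS hD₀c).2.1 p hpD₀
      exact ⟨u, fun t ht => (subset_sUnion_of_mem hD₀c) (hu t ht)⟩
    · rintro p ⟨Dp, hDpc, hpDp⟩ q ⟨Dq, hDqc, hqDq⟩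
      rcases hchain.total hDpc hDqc with h | h
      · exact (hcS hDqc).2.2 p (h hpDp) hqDq
      · exact (hcS hDpc).2.2 p hpDp (h hqDq)
  obtain ⟨D, hKD, hDS, hDmax⟩ := zorn_subset_nonempty S hchainub K hKS
  refine ⟨D, ⟨hKne.mono hKD, hDS.2.1, hDS.2.2, ?_⟩, hKD⟩
  intro D' hDD' h1 h2
  have hD'S : D' ∈ S := ⟨hKD.trans hDD', h1, h2⟩
  exact le_antisymm (hDmax hD'S hDD') hDD'
end
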